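/- In the unbiased Bernoulli trie model, let Ψ(t,z) = ∑_{j=1}^∞ j·E[e^{tδ_j}]·z^j/j!. Then for every real t with t < ln 2 at which all E[e^{tδ_j}] are finite (in particular for all |t| < ln 2) and every real z ≥ 0: e^{−z}·Ψ(t,z) − z = −(1 − e^t)·z·∑_{k=0}^∞ e^{tk}·(1 − e^{−z/2^k}), the series on the right converging absolutely. -/

import Mathlib

open MeasureTheory ProbabilityTheory Filter
open scoped ENNReal NNReal Topology

noncomputable section

/-- The length of the longest common prefix of two infinite binary strings. -/
def lcp (x y : ℕ → Bool) : ℕ := sSup {m : ℕ | ∀ k < m, x k = y k}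

/-- The depth of key `i` in the trie built on the keys `X 0, …, X (n-1)`. -/
def trieDepth (X : ℕ → ℕ → Bool) (n i : ℕ) : ℕ :=
  1 + ((Finset.range n).erase i).sup fun j => lcp (X i) (X j)

/-- The distance between the (distinct) keys `i` and `j` in the trie on `n` keys. -/
def trieDist (X : ℕ → ℕ → Bool) (n i j : ℕ) : ℕ :=
  trieDepth X n i + trieDepth X n j - 2 * lcp (X i) (X j)

/-- The unbiased Bernoulli trie model: the keys `X 0, X 1, …` are i.i.d. random infinite
binary strings whose bits are i.i.d. uniform on `{0,1}`. -/
structure TrieModel {Ω : Type*} [MeasurableSpace Ω] (P : Measure Ω)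
    (X : ℕ → Ω → ℕ → Bool) : Prop where
  prob : IsProbabilityMeasure P
  measBit : ∀ i k, Measurable fun ω => X i ω k
  indepBits : iIndepFun
      (fun (p : ℕ × ℕ) ω => X p.1 ω p.2) P
  fairBits : ∀ i k, P {ω | X i ω k = true} = 1 / 2

/-- `δ n` is distributed as the depth `d_I(n)` of a uniformly random key `I` among the `n`
keys, chosen independently of the keys (with `δ 1 = 0` for a single key). -/
def IsTrieDepthRV {Ω : Type*} [MeasurableSpace Ω] (P : Measure Ω)
    (X : ℕ → Ω → ℕ → Bool) (δ : ℕ → Ω → ℕ) : Prop :=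
  (∀ n, Measurable (δ n)) ∧
  P {ω | δ 1 ω = 0} = 1 ∧
  ∀ n, 2 ≤ n → ∀ m : ℕ,
    P {ω | δ n ω = m} =
      (n : ℝ≥0∞)⁻¹ *
        ∑ i ∈ Finset.range n, P {ω | trieDepth (fun k => X k ω) n i = m}

/-!
Key `i` has depth at most `m` exactly when its first `m` bits differ from those of each of the
other `n - 1` keys (outside the null event that two keys coincide). The prefixes of the `n` keys
are uniform on `({0,1}^m)^n`, so counting gives `P(d_i(n) ≤ m) = (1 - 2^{-m})^{n-1}`. Summation by
parts turns this distribution function into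
`E[e^{tδ_n}] = 1 + (e^t - 1) ∑_m e^{tm} (1 - (1 - 2^{-m})^{n-1})`. Inserting this into `Ψ` and
exchanging the two sums (all terms are nonnegative), the inner sum over `j` is, for each `m`, the
exponential series `∑_j j z^j/j! (1 - b^{j-1}) = z e^z - z e^{bz}` with `b = 1 - 2^{-m}`, and
`e^{bz} = e^z e^{-z/2^m}`.
-/

open Finset

/-- Both sides are the junk value `0` when `f` is not `μ`-integrable. -/
lemma integral_eq_tsum_measureReal_singleton {α : Type*} [MeasurableSpace α] [Countable α]
    [MeasurableSingletonClass α] {μ : Measure α} [IsFiniteMeasure μ] (f : α → ℝ) :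
    ∫ x, f x ∂μ = ∑' x, μ.real {x} * f x := by
  conv_lhs => rw [← μ.sum_smul_dirac]
  rw [integral_sum_dirac fun _ => measure_ne_top μ _]
  rfl

lemma lcp_lt_iff_exists_ne {x y : ℕ → Bool} (h : x ≠ y) {m : ℕ} :
    lcp x y < m ↔ ∃ k < m, x k ≠ y k := by
  obtain ⟨k₀, hk₀⟩ := Function.ne_iff.mp h
  set S := {m : ℕ | ∀ k < m, x k = y k}
  have hbdd : BddAbove S := ⟨k₀, fun m hm => not_lt.mp fun hlt => hk₀ (hm k₀ hlt)⟩
  have hS : S.Nonempty := ⟨0, fun k hk => absurd hk k.not_lt_zero⟩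
  constructor
  · intro hlt
    by_contra! hall
    exact (le_csSup hbdd hall).not_gt hlt
  · rintro ⟨k, hk, hne⟩
    by_contra! hle
    exact hne (Nat.sSup_mem hS hbdd k (hk.trans_le hle))

lemma trieDepth_le_iff {X : ℕ → ℕ → Bool} {n i m : ℕ} (hne : ((range n).erase i).Nonempty)
    (hdist : ∀ j ∈ (range n).erase i, X i ≠ X j) :
    trieDepth X n i ≤ m ↔ ∀ j ∈ (range n).erase i, ∃ k < m, X i k ≠ X j k := by
  rw [trieDepth, add_comm, ← Nat.lt_iff_add_one_le]
  rcases Nat.eq_zero_or_pos m with rfl | hm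
  · obtain ⟨j, hj⟩ := hne
    simp only [Nat.not_lt_zero, false_iff, not_forall]
    exact ⟨j, hj, by simp⟩
  · rw [Finset.sup_lt_iff hm]
    exact forall₂_congr fun j hj => lcp_lt_iff_exists_ne (hdist j hj)

lemma Nat.card_subtype_forall_ne_apply_self {ι α : Type*} [Finite ι] [Finite α] (i : ι) :
    Nat.card {f : ι → α // ∀ j ≠ i, f j ≠ f i} =
      Nat.card α * (Nat.card α - 1) ^ (Nat.card ι - 1) := by
  classical
  have := Fintype.ofFinite ι
  have := Fintype.ofFinite α
  let e : {f : ι → α // ∀ j ≠ i, f j ≠ f i} ≃ Σ a : α, ({j // j ≠ i} → {b // b ≠ a}) :=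
    ((Equiv.piSplitAt i fun _ => α).subtypeEquiv fun f => by
        simp [Equiv.piSplitAt]).trans <|
      (Equiv.subtypeProdEquivSigmaSubtype fun a (g : {j // j ≠ i} → α) => ∀ j, g j ≠ a).trans <|
        Equiv.sigmaCongrRight fun a => Equiv.subtypePiEquivPi (p := fun _ b => b ≠ a)
  rw [Nat.card_congr e]
  simp [Nat.card_eq_fintype_card, Fintype.card_sigma, Fintype.card_subtype_compl]

open Nat in
lemma hasSum_natCast_mul_pow_div_factorial_mul_pow (z b : ℝ) :
    HasSum (fun j : ℕ => j * z ^ j / j ! * b ^ (j - 1)) (z * Real.exp (b * z)) := by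
  have h := (NormedSpace.expSeries_div_hasSum_exp (b * z)).mul_left z
  rw [← Real.exp_eq_exp_ℝ] at h
  refine (hasSum_nat_add_iff' 1).mp ?_
  simp only [Finset.sum_range_one, Nat.cast_zero, zero_mul, zero_div, sub_zero]
  refine h.congr_fun fun i => ?_
  rw [Nat.add_sub_cancel, factorial_succ, mul_pow]
  push_cast
  field_simp
  ring

lemma hasSum_sub_pred_mul_pow {F : ℕ → ℝ} {q : ℝ} (hF : F 0 = 0)
    (hs : Summable fun m => q ^ m * (1 - F m)) :
    HasSum (fun m => (F m - F (m - 1)) * q ^ m) (1 + (q - 1) * ∑' m, q ^ m * (1 - F m)) := by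
  set G := ∑' m, q ^ m * (1 - F m)
  have h := (hs.hasSum.mul_left q).sub ((hasSum_nat_add_iff' 1).mpr hs.hasSum)
  refine (hasSum_nat_add_iff' 1).mp ?_
  simp only [Finset.sum_range_one, sub_self, zero_mul, sub_zero, add_tsub_cancel_right]
  rw [Finset.sum_range_one] at h
  rw [show 1 + (q - 1) * G = q * G - (G - q ^ 0 * (1 - F 0)) by rw [hF]; ring]
  exact h.congr_fun fun m => by ring

def trieDepthCDF (n m : ℕ) : ℝ := (1 - (2 : ℝ)⁻¹ ^ m) ^ (n - 1)

lemma trieDepthCDF_le_one (n m : ℕ) : trieDepthCDF n m ≤ 1 :=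
  pow_le_one₀ (sub_nonneg.mpr (pow_le_one₀ (by norm_num) (by norm_num)))
    (sub_le_self _ (by positivity))

lemma trieDepthCDF_mono (n : ℕ) : Monotone (trieDepthCDF n) := fun _ _ h =>
  pow_le_pow_left₀ (sub_nonneg.mpr (pow_le_one₀ (by norm_num) (by norm_num)))
    (sub_le_sub_left (pow_le_pow_of_le_one (by norm_num) (by norm_num) h) _) _

lemma trieDepthCDF_zero {n : ℕ} (hn : 2 ≤ n) : trieDepthCDF n 0 = 0 := by
  simp [trieDepthCDF, zero_pow (by omega : n - 1 ≠ 0)]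

lemma trieDepthCDF_one (m : ℕ) : trieDepthCDF 1 m = 1 := by
  simp [trieDepthCDF]

lemma one_sub_trieDepthCDF_le (n m : ℕ) :
    1 - trieDepthCDF n m ≤ (n - 1 : ℕ) * (2 : ℝ)⁻¹ ^ m := by
  have := one_add_mul_le_pow (a := -(2 : ℝ)⁻¹ ^ m)
    (by linarith [pow_le_one₀ (n := m) (by norm_num : (0 : ℝ) ≤ 2⁻¹) (by norm_num)]) (n - 1)
  rw [← sub_eq_add_neg, mul_neg] at this
  rw [trieDepthCDF]
  linarith

lemma tendsto_trieDepthCDF (n : ℕ) : Tendsto (trieDepthCDF n) atTop (𝓝 1) := by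
  show Tendsto (fun m => (1 - (2 : ℝ)⁻¹ ^ m) ^ (n - 1)) atTop (𝓝 1)
  simpa using ((tendsto_pow_atTop_nhds_zero_of_lt_one (by norm_num : (0 : ℝ) ≤ 2⁻¹)
    (by norm_num)).const_sub 1).pow (n - 1)

lemma summable_pow_mul_one_sub_trieDepthCDF {q : ℝ} (hq0 : 0 ≤ q) (hq : q < 2) (n : ℕ) :
    Summable fun m => q ^ m * (1 - trieDepthCDF n m) := by
  refine Summable.of_nonneg_of_le (fun m => mul_nonneg (pow_nonneg hq0 m)
    (sub_nonneg.mpr (trieDepthCDF_le_one n m))) (fun m => ?_)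
    ((summable_geometric_of_lt_one (by positivity) (by linarith : q * 2⁻¹ < 1)).mul_left
      ((n - 1 : ℕ) : ℝ))
  calc q ^ m * (1 - trieDepthCDF n m) ≤ q ^ m * ((n - 1 : ℕ) * (2 : ℝ)⁻¹ ^ m) :=
        mul_le_mul_of_nonneg_left (one_sub_trieDepthCDF_le n m) (pow_nonneg hq0 m)
    _ = (n - 1 : ℕ) * (q * 2⁻¹) ^ m := by ring

lemma summable_pow_mul_one_sub_exp_neg_div_two_pow {q z : ℝ} (hq0 : 0 ≤ q) (hq : q < 2)
    (hz : 0 ≤ z) : Summable fun m : ℕ => q ^ m * (1 - Real.exp (-z / 2 ^ m)) := by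
  refine Summable.of_nonneg_of_le (fun m => mul_nonneg (pow_nonneg hq0 m)
    (sub_nonneg.mpr (Real.exp_le_one_iff.mpr
      (div_nonpos_of_nonpos_of_nonneg (neg_nonpos.mpr hz) (by positivity))))) (fun m => ?_)
    ((summable_geometric_of_lt_one (by positivity) (by linarith : q * 2⁻¹ < 1)).mul_left z)
  calc q ^ m * (1 - Real.exp (-z / 2 ^ m)) ≤ q ^ m * (z / 2 ^ m) := by
        gcongr; linarith [Real.add_one_le_exp (-z / 2 ^ m), neg_div (2 ^ m : ℝ) z]
    _ = z * (q * 2⁻¹) ^ m := by rw [mul_pow, inv_pow]; ring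

open Nat in
lemma hasSum_mul_tsum_pow_mul_one_sub_trieDepthCDF {q z : ℝ} (hq0 : 0 ≤ q) (hq : q < 2)
    (hz : 0 ≤ z) :
    HasSum (fun j : ℕ => j * z ^ j / j ! * ∑' m : ℕ, q ^ m * (1 - trieDepthCDF j m))
      (z * Real.exp z * ∑' m : ℕ, q ^ m * (1 - Real.exp (-z / 2 ^ m))) := by
  set f : ℕ × ℕ → ℝ := fun p => p.2 * z ^ p.2 / p.2 ! * (q ^ p.1 * (1 - trieDepthCDF p.2 p.1))
  have hf0 : 0 ≤ f := fun p => mul_nonneg (by positivity)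
    (mul_nonneg (pow_nonneg hq0 _) (sub_nonneg.mpr (trieDepthCDF_le_one _ _)))
  have hrow : ∀ m : ℕ, HasSum (fun j => f (m, j))
      (z * Real.exp z * (q ^ m * (1 - Real.exp (-z / 2 ^ m)))) := by
    intro m
    have h := ((hasSum_natCast_mul_pow_div_factorial_mul_pow z 1).sub
      (hasSum_natCast_mul_pow_div_factorial_mul_pow z (1 - 2⁻¹ ^ m))).mul_left (q ^ m)
    have hexp : Real.exp ((1 - 2⁻¹ ^ m) * z) = Real.exp z * Real.exp (-z / 2 ^ m) := by
      rw [← Real.exp_add, inv_pow]; ring_nf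
    rw [one_mul, hexp] at h
    rw [show z * Real.exp z * (q ^ m * (1 - Real.exp (-z / 2 ^ m))) =
      q ^ m * (z * Real.exp z - z * (Real.exp z * Real.exp (-z / 2 ^ m))) by ring]
    refine h.congr_fun fun j => ?_
    simp only [f, trieDepthCDF, one_pow]
    ring
  have hK := summable_pow_mul_one_sub_exp_neg_div_two_pow hq0 hq hz
  have hs : Summable f := (summable_prod_of_nonneg hf0).mpr
    ⟨fun m => (hrow m).summable, by simpa only [(hrow _).tsum_eq] using hK.mul_left _⟩
  have hf : HasSum f (z * Real.exp z * ∑' m : ℕ, q ^ m * (1 - Real.exp (-z / 2 ^ m))) :=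
    (hs.hasSum.prod_fiberwise hrow).unique (hK.hasSum.mul_left _) ▸ hs.hasSum
  exact ((Equiv.prodComm ℕ ℕ).hasSum_iff.mpr hf).prod_fiberwise fun j =>
    (summable_pow_mul_one_sub_trieDepthCDF hq0 hq j).hasSum.mul_left _

section TrieModel

variable {Ω : Type*} {X : ℕ → Ω → ℕ → Bool}

def prefixPattern (X : ℕ → Ω → ℕ → Bool) (n m : ℕ) (ω : Ω) : Fin n → Fin m → Bool :=
  fun j k => X j ω k

def keySeparated (X : ℕ → Ω → ℕ → Bool) (n i m : ℕ) : Set Ω :=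
  {ω | ∀ j ∈ (range n).erase i, ∃ k < m, X i ω k ≠ X j ω k}

lemma keySeparated_eq_preimage_prefixPattern {n i : ℕ} (hi : i < n) (m : ℕ) :
    keySeparated X n i m =
      prefixPattern X n m ⁻¹' {f | ∀ j ≠ (⟨i, hi⟩ : Fin n), f j ≠ f ⟨i, hi⟩} := by
  ext ω
  simp only [keySeparated, prefixPattern, Set.mem_ofPred_eq, Set.mem_preimage, mem_erase,
    mem_range, ne_eq, funext_iff, not_forall, Fin.forall_iff, Fin.ext_iff, and_imp, exists_prop]
  constructor <;> intro h j h₁ h₂ <;> obtain ⟨k, hk, hne⟩ := h j h₂ h₁ <;>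
    exact ⟨k, hk, Ne.symm hne⟩

lemma monotone_keySeparated (n i : ℕ) : Monotone (keySeparated X n i) :=
  fun _ _ h _ hω j hj => (hω j hj).imp fun _ hk => ⟨hk.1.trans_le h, hk.2⟩

variable [MeasurableSpace Ω] {P : Measure Ω}

lemma TrieModel.measurable_prefixPattern (hX : TrieModel P X) (n m : ℕ) :
    Measurable (prefixPattern X n m) :=
  measurable_pi_lambda _ fun j => measurable_pi_lambda _ fun k => hX.measBit j k

lemma TrieModel.measure_bit_eq (hX : TrieModel P X) (i k : ℕ) (b : Bool) :
    P {ω | X i ω k = b} = 2⁻¹ := by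
  have := hX.prob
  have hm : MeasurableSet {ω | X i ω k = true} := hX.measBit i k (measurableSet_singleton true)
  cases b
  · rw [show {ω | X i ω k = false} = {ω | X i ω k = true}ᶜ by ext; simp,
      prob_compl_eq_one_sub hm, hX.fairBits, one_div, ENNReal.one_sub_inv_two]
  · rw [hX.fairBits, one_div]

lemma TrieModel.map_prefixPattern (hX : TrieModel P X) (n m : ℕ) :
    P.map (prefixPattern X n m) = (2⁻¹ ^ (n * m) : ℝ≥0∞) • Measure.count := by
  refine Measure.ext_iff_singleton.mpr fun f => ?_
  have hindep := hX.indepBits.precomp (g := fun p : Fin n × Fin m => ((p.1 : ℕ), (p.2 : ℕ)))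
    fun _ _ h => Prod.ext (Fin.ext (congrArg Prod.fst h)) (Fin.ext (congrArg Prod.snd h))
  have hpre : prefixPattern X n m ⁻¹' {f} =
      ⋂ p ∈ (Finset.univ : Finset (Fin n × Fin m)), (fun ω => X p.1 ω p.2) ⁻¹' {f p.1 p.2} := by
    ext ω; simp [prefixPattern, funext_iff]
  rw [Measure.map_apply (hX.measurable_prefixPattern n m) (measurableSet_singleton f),
    Measure.smul_apply, Measure.count_singleton, smul_eq_mul, mul_one, hpre,
    hindep.measure_inter_preimage_eq_mul _ fun p _ => measurableSet_singleton _]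
  simp [Set.preimage, hX.measure_bit_eq]

lemma TrieModel.measurableSet_keySeparated (hX : TrieModel P X) {n i : ℕ} (hi : i < n)
    (m : ℕ) : MeasurableSet (keySeparated X n i m) := by
  rw [keySeparated_eq_preimage_prefixPattern hi m]
  exact hX.measurable_prefixPattern n m (Set.toFinite _).measurableSet

lemma TrieModel.measureReal_keySeparated (hX : TrieModel P X) {n i : ℕ} (hi : i < n) (m : ℕ) :
    P.real (keySeparated X n i m) = trieDepthCDF n m := by
  have := hX.prob
  rw [keySeparated_eq_preimage_prefixPattern hi,
    ← map_measureReal_apply (hX.measurable_prefixPattern n m) (Set.toFinite _).measurableSet,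
    hX.map_prefixPattern, measureReal_def, Measure.smul_apply,
    Measure.count_apply (Set.toFinite _).measurableSet, ← ENat.card_coe_set_eq,
    ENat.card_eq_coe_natCard, Set.coe_ofPred, Nat.card_subtype_forall_ne_apply_self]
  simp only [Nat.card_eq_fintype_card, Fintype.card_fun, Fintype.card_bool, Fintype.card_fin,
    smul_eq_mul, ENNReal.toReal_mul, ENat.toENNReal_coe, ENNReal.toReal_natCast,
    ENNReal.toReal_pow, ENNReal.toReal_inv, ENNReal.toReal_ofNat]
  push_cast [Nat.one_le_two_pow]
  obtain ⟨k, rfl⟩ : ∃ k, n = k + 1 := ⟨n - 1, by omega⟩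
  have h : (2 : ℝ) ^ m ≠ 0 := by positivity
  rw [trieDepthCDF, Nat.add_sub_cancel, pow_mul', inv_pow,
    show ((2 : ℝ) ^ m)⁻¹ ^ (k + 1) * (2 ^ m * (2 ^ m - 1) ^ k) =
      ((2 ^ m)⁻¹ * 2 ^ m) * ((2 ^ m)⁻¹ ^ k * (2 ^ m - 1) ^ k) by ring,
    inv_mul_cancel₀ h, one_mul, ← mul_pow, mul_sub, inv_mul_cancel₀ h, mul_one]

lemma TrieModel.ae_mem_iUnion_keySeparated (hX : TrieModel P X) {n i : ℕ} (hi : i < n) :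
    ∀ᵐ ω ∂P, ω ∈ ⋃ m, keySeparated X n i m := by
  have := hX.prob
  rw [ae_mem_iff_measure_eq
    (MeasurableSet.iUnion (hX.measurableSet_keySeparated hi)).nullMeasurableSet, measure_univ]
  refine tendsto_nhds_unique (tendsto_measure_iUnion_atTop (monotone_keySeparated n i)) ?_
  have hP : ⇑P ∘ keySeparated X n i = fun m => ENNReal.ofReal (trieDepthCDF n m) :=
    funext fun m => by
      rw [Function.comp_apply, ← ofReal_measureReal, hX.measureReal_keySeparated hi]
  rw [hP]
  simpa using ENNReal.tendsto_ofReal (tendsto_trieDepthCDF n)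

lemma TrieModel.trieDepth_eq_ae_eq (hX : TrieModel P X) {n i : ℕ} (hn : 2 ≤ n) (hi : i < n)
    (m : ℕ) :
    {ω | trieDepth (fun k => X k ω) n i = m} =ᵐ[P]
      (keySeparated X n i m \ keySeparated X n i (m - 1) : Set Ω) := by
  have hne : ((range n).erase i).Nonempty := Finset.card_pos.mp <| by
    rw [card_erase_of_mem (mem_range.mpr hi), card_range]; omega
  refine (hX.ae_mem_iUnion_keySeparated hi).mono fun ω hω => propext ?_
  obtain ⟨M, hM⟩ := Set.mem_iUnion.mp hω
  have hle : ∀ m, trieDepth (fun k => X k ω) n i ≤ m ↔ ω ∈ keySeparated X n i m := fun m =>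
    trieDepth_le_iff hne fun j hj h => (hM j hj).elim fun k hk => hk.2 (congrFun h k)
  have hpos : 1 ≤ trieDepth (fun k => X k ω) n i := Nat.le_add_right 1 _
  change trieDepth (fun k => X k ω) n i = m ↔
    ω ∈ keySeparated X n i m \ keySeparated X n i (m - 1)
  rw [Set.mem_sdiff, ← hle, ← hle]
  omega

lemma TrieModel.measureReal_trieDepth_eq (hX : TrieModel P X) {n i : ℕ} (hn : 2 ≤ n)
    (hi : i < n) (m : ℕ) :
    P.real {ω | trieDepth (fun k => X k ω) n i = m} =
      trieDepthCDF n m - trieDepthCDF n (m - 1) := by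
  have := hX.prob
  rw [measureReal_congr (hX.trieDepth_eq_ae_eq hn hi m),
    measureReal_sdiff (monotone_keySeparated n i (Nat.sub_le m 1))
      (hX.measurableSet_keySeparated hi _),
    hX.measureReal_keySeparated hi, hX.measureReal_keySeparated hi]

lemma TrieModel.measureReal_trieDepthRV_eq (hX : TrieModel P X) {δ : ℕ → Ω → ℕ}
    (hδ : IsTrieDepthRV P X δ) {n : ℕ} (hn : 2 ≤ n) (m : ℕ) :
    P.real {ω | δ n ω = m} = trieDepthCDF n m - trieDepthCDF n (m - 1) := by
  have := hX.prob
  have hdepth : ∀ i ∈ range n, P {ω | trieDepth (fun k => X k ω) n i = m} =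
      ENNReal.ofReal (trieDepthCDF n m - trieDepthCDF n (m - 1)) := fun i hi => by
    rw [← ofReal_measureReal, hX.measureReal_trieDepth_eq hn (mem_range.mp hi)]
  rw [measureReal_def, hδ.2.2 n hn m, sum_congr rfl hdepth, sum_const, card_range, nsmul_eq_mul,
    ← mul_assoc, ENNReal.inv_mul_cancel (Nat.cast_ne_zero.mpr (by omega))
      (ENNReal.natCast_ne_top n), one_mul,
    ENNReal.toReal_ofReal (sub_nonneg.mpr (trieDepthCDF_mono n (Nat.sub_le m 1)))]

lemma TrieModel.integral_exp_mul_trieDepthRV (hX : TrieModel P X) {δ : ℕ → Ω → ℕ}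
    (hδ : IsTrieDepthRV P X δ) {t : ℝ} (ht : Real.exp t < 2) {j : ℕ} (hj : 1 ≤ j) :
    ∫ ω, Real.exp (t * δ j ω) ∂P =
      1 + (Real.exp t - 1) * ∑' m : ℕ, Real.exp t ^ m * (1 - trieDepthCDF j m) := by
  have := hX.prob
  obtain rfl | hj := hj.eq_or_lt
  · have hδ₁ : ∀ᵐ ω ∂P, δ 1 ω = 0 := (ae_iff_measure_eq (p := fun ω => δ 1 ω = 0)
      (hδ.1 1 (measurableSet_singleton 0)).nullMeasurableSet).mpr (by rw [hδ.2.1, measure_univ])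
    rw [integral_congr_ae (g := fun _ => 1) (hδ₁.mono fun ω h => by simp [h])]
    simp [trieDepthCDF_one]
  · rw [← integral_map (f := fun d : ℕ => Real.exp (t * d)) (hδ.1 j).aemeasurable
      Measurable.of_discrete.aestronglyMeasurable, integral_eq_tsum_measureReal_singleton]
    simp_rw [map_measureReal_apply (hδ.1 j) (measurableSet_singleton _), Set.preimage,
      Set.mem_singleton_iff, hX.measureReal_trieDepthRV_eq hδ hj, mul_comm t, Real.exp_nat_mul]
    exact (hasSum_sub_pred_mul_pow (trieDepthCDF_zero hj)
      (summable_pow_mul_one_sub_trieDepthCDF (Real.exp_pos t).le ht j)).tsum_eq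

end TrieModel

theorem trie_depth_poissonized_closed_form_general {Ω : Type*} [MeasurableSpace Ω]
    (P : Measure Ω) (X : ℕ → Ω → ℕ → Bool) (δ : ℕ → Ω → ℕ)
    (hX : TrieModel P X) (hδ : IsTrieDepthRV P X δ)
    (t : ℝ) (ht : t < Real.log 2)
    (z : ℝ) (hz : 0 ≤ z) :
    Summable (fun k : ℕ => Real.exp (t * k) * (1 - Real.exp (-z / 2 ^ k))) ∧
    Real.exp (-z) *
          (∑' j : ℕ,
            (j : ℝ) * (∫ ω, Real.exp (t * δ j ω) ∂P) * z ^ j / (j.factorial : ℝ)) -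
        z =
      -(1 - Real.exp t) * z *
        ∑' k : ℕ, Real.exp (t * k) * (1 - Real.exp (-z / 2 ^ k)) := by
  have hq : Real.exp t < 2 := (Real.lt_log_iff_exp_lt two_pos).mp ht
  have hexp : (fun k : ℕ => Real.exp (t * k) * (1 - Real.exp (-z / 2 ^ k))) =
      fun k : ℕ => Real.exp t ^ k * (1 - Real.exp (-z / 2 ^ k)) := by
    simp_rw [mul_comm t, Real.exp_nat_mul]
  rw [hexp]
  refine ⟨summable_pow_mul_one_sub_exp_neg_div_two_pow (Real.exp_pos t).le hq hz, ?_⟩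
  have hΨ := (hasSum_natCast_mul_pow_div_factorial_mul_pow z 1).add
    ((hasSum_mul_tsum_pow_mul_one_sub_trieDepthCDF (Real.exp_pos t).le hq hz).mul_left
      (Real.exp t - 1))
  rw [tsum_congr fun j => ?_, hΨ.tsum_eq, one_mul]
  · have h : Real.exp (-z) * Real.exp z = 1 := by
      rw [← Real.exp_add, neg_add_cancel, Real.exp_zero]
    linear_combination (z + (Real.exp t - 1) * z *
      ∑' k : ℕ, Real.exp t ^ k * (1 - Real.exp (-z / 2 ^ k))) * h
  · rcases j.eq_zero_or_pos with rfl | hj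
    · simp
    · rw [hX.integral_exp_mul_trieDepthRV hδ hq hj, one_pow]
      ring

/-- For `t < ln 2` at which all `E[e^{tδ_j}]` are finite, and every `z ≥ 0`:
`e^{−z} Ψ(t,z) − z = −(1 − e^t) z ∑_{k≥0} e^{tk} (1 − e^{−z/2^k})`, where
`Ψ(t,z) = ∑_{j≥1} j E[e^{tδ_j}] z^j / j!`, the series on the right converging
absolutely. -/
theorem trie_depth_poissonized_closed_form {Ω : Type*} [MeasurableSpace Ω]
    (P : Measure Ω) (X : ℕ → Ω → ℕ → Bool) (δ : ℕ → Ω → ℕ)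
    (hX : TrieModel P X) (hδ : IsTrieDepthRV P X δ)
    (t : ℝ) (ht : t < Real.log 2)
    (hint : ∀ j : ℕ, 1 ≤ j → Integrable (fun ω => Real.exp (t * δ j ω)) P)
    (z : ℝ) (hz : 0 ≤ z) :
    Summable (fun k : ℕ => Real.exp (t * k) * (1 - Real.exp (-z / 2 ^ k))) ∧
    Real.exp (-z) *
          (∑' j : ℕ,
            (j : ℝ) * (∫ ω, Real.exp (t * δ j ω) ∂P) * z ^ j / (j.factorial : ℝ)) -
        z =
      -(1 - Real.exp t) * z *
        ∑' k : ℕ, Real.exp (t * k) * (1 - Real.exp (-z / 2 ^ k)) :=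
  trie_depth_poissonized_closed_form_general P X δ hX hδ t ht z hz
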